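/- For all a, b ∈ M₂(ℂ) with det a = det b and (a,b) ≠ (0,0), the kernel of m_{a,b} equals the image (range) of m′_{a,b}; that is, the isotropic 4-plane cut out by Clifford multiplication by an isotropic vector is both the kernel of multiplication in one direction and the image of multiplication in the other direction. -/
import Mathlib


open Matrix

/-- `M2` is the algebra of 2×2 complex matrices. -/
abbrev M2 : Type := Matrix (Fin 2) (Fin 2) ℂ

lemma adjugate_add (x y : M2) : (x + y).adjugate = x.adjugate + y.adjugate := by
  rw [Matrix.adjugate_fin_two, Matrix.adjugate_fin_two, Matrix.adjugate_fin_two]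
  ext i j
  fin_cases i <;> fin_cases j <;> simp [Matrix.add_apply] <;> ring

lemma adjugate_csmul (c : ℂ) (x : M2) : (c • x).adjugate = c • x.adjugate := by
  rw [Matrix.adjugate_fin_two, Matrix.adjugate_fin_two]
  ext i j
  fin_cases i <;> fin_cases j <;> simp [Matrix.smul_apply]

/-- Clifford multiplication by the vector `(a, b) ∈ W = M₂(ℂ) × M₂(ℂ)`, viewed as a
`ℂ`-linear map `S⁺ → S⁻`, both half-spinor spaces being identified with `W`:
`m_{a,b}(x, y) = (adj(a)·adj(x) + adj(y)·b, b·x + y·adj(a))`. -/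
noncomputable def cliffordMul (a b : M2) : (M2 × M2) →ₗ[ℂ] (M2 × M2) where
  toFun p := (a.adjugate * p.1.adjugate + p.2.adjugate * b, b * p.1 + p.2 * a.adjugate)
  map_add' := by
    intro p q
    simp only [adjugate_add, mul_add, add_mul, Prod.fst_add, Prod.snd_add, Prod.mk_add_mk]
    refine Prod.ext ?_ ?_ <;> dsimp <;> abel
  map_smul' := by
    intro c p
    simp [adjugate_csmul, Matrix.mul_smul, Matrix.smul_mul, smul_add]

/-- Clifford multiplication by the vector `(a, b) ∈ W = M₂(ℂ) × M₂(ℂ)`, viewed as a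
`ℂ`-linear map `S⁻ → S⁺`, both half-spinor spaces being identified with `W`:
`m′_{a,b}(u, v) = (adj(u)·adj(a) − adj(b)·v, v·a − b·adj(u))`. -/
noncomputable def cliffordMul' (a b : M2) : (M2 × M2) →ₗ[ℂ] (M2 × M2) where
  toFun p := (p.1.adjugate * a.adjugate - b.adjugate * p.2, p.2 * a - b * p.1.adjugate)
  map_add' := by
    intro p q
    simp only [adjugate_add, mul_add, add_mul, sub_mul, mul_sub, Prod.fst_add, Prod.snd_add,
      Prod.mk_add_mk]
    refine Prod.ext ?_ ?_ <;> dsimp <;> abel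
  map_smul' := by
    intro c p
    simp [adjugate_csmul, Matrix.mul_smul, Matrix.smul_mul, smul_sub]


lemma adj_adj (x : M2) : x.adjugate.adjugate = x := by
  rw [Matrix.adjugate_adjugate x (by simp)]
  norm_num

lemma adjugate_sub (x y : M2) : (x - y).adjugate = x.adjugate - y.adjugate := by
  rw [Matrix.adjugate_fin_two, Matrix.adjugate_fin_two, Matrix.adjugate_fin_two]
  ext i j
  fin_cases i <;> fin_cases j <;> simp [Matrix.sub_apply] <;> ring

lemma adj00 (x : M2) : x.adjugate 0 0 = x 1 1 := by simp [Matrix.adjugate_fin_two]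
lemma adj01 (x : M2) : x.adjugate 0 1 = -x 0 1 := by simp [Matrix.adjugate_fin_two]
lemma adj10 (x : M2) : x.adjugate 1 0 = -x 1 0 := by simp [Matrix.adjugate_fin_two]
lemma adj11 (x : M2) : x.adjugate 1 1 = x 0 0 := by simp [Matrix.adjugate_fin_two]

/-- The composition `m_{a,b} ∘ m′_{a,b}` is multiplication by `det a - det b`. -/
lemma cliffordMul_comp_cliffordMul' (a b : M2) (p : M2 × M2) :
    cliffordMul a b (cliffordMul' a b p) = (a.det - b.det) • p := by
  obtain ⟨u, v⟩ := p
  simp only [cliffordMul, cliffordMul', LinearMap.coe_mk, AddHom.coe_mk, Prod.smul_mk]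
  simp only [adjugate_sub, Matrix.adjugate_mul_distrib, adj_adj]
  refine Prod.ext ?_ ?_ <;> dsimp <;> ext i j <;> fin_cases i <;> fin_cases j <;>
    simp only [Matrix.mul_apply, Fin.sum_univ_two, Matrix.add_apply, Matrix.sub_apply,
      Matrix.smul_apply, Fin.isValue, adj00, adj01, adj10, adj11, Matrix.det_fin_two,
      smul_eq_mul, Fin.mk_zero, Fin.mk_one] <;> ring

/-- Polarized Clifford relation:
`m′_{a,b} ∘ m_{c,d} + m′_{c,d} ∘ m_{a,b} = B((a,b),(c,d)) • id`. -/
lemma cliffordMul'_polar (a b c d : M2) (p : M2 × M2) :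
    cliffordMul' a b (cliffordMul c d p) + cliffordMul' c d (cliffordMul a b p)
      = ((((a + c).det - a.det - c.det) - ((b + d).det - b.det - d.det))) • p := by
  obtain ⟨x, y⟩ := p
  simp only [cliffordMul, cliffordMul', LinearMap.coe_mk, AddHom.coe_mk, Prod.smul_mk,
    Prod.mk_add_mk]
  simp only [adjugate_add, Matrix.adjugate_mul_distrib, adj_adj]
  refine Prod.ext ?_ ?_ <;> dsimp <;> ext i j <;> fin_cases i <;> fin_cases j <;>
    simp only [Matrix.mul_apply, Fin.sum_univ_two, Matrix.add_apply, Matrix.sub_apply,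
      Matrix.smul_apply, Fin.isValue, adj00, adj01, adj10, adj11, Matrix.det_fin_two,
      smul_eq_mul, Fin.mk_zero, Fin.mk_one] <;> ring

/-- A companion matrix whose polarized determinant pairing with a nonzero `m` is nonzero. -/
noncomputable def cconj (m : M2) : M2 :=
  !![starRingEnd ℂ (m 1 1), -starRingEnd ℂ (m 1 0);
     -starRingEnd ℂ (m 0 1), starRingEnd ℂ (m 0 0)]

lemma polar_cconj_ne (m : M2) (hm : m ≠ 0) :
    (m + cconj m).det - m.det - (cconj m).det ≠ 0 := by
  intro heq
  apply hm
  have h2 : ((Complex.normSq (m 0 0) + Complex.normSq (m 0 1)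
      + Complex.normSq (m 1 0) + Complex.normSq (m 1 1) : ℝ) : ℂ) = 0 := by
    rw [← heq]
    push_cast
    rw [← Complex.mul_conj, ← Complex.mul_conj, ← Complex.mul_conj, ← Complex.mul_conj]
    simp [Matrix.det_fin_two, Matrix.add_apply, cconj]
    ring
  have h3 : Complex.normSq (m 0 0) + Complex.normSq (m 0 1)
      + Complex.normSq (m 1 0) + Complex.normSq (m 1 1) = 0 := by exact_mod_cast h2
  have h00 : m 0 0 = 0 := Complex.normSq_eq_zero.mp (by
    nlinarith [Complex.normSq_nonneg (m 0 1), Complex.normSq_nonneg (m 1 0),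
      Complex.normSq_nonneg (m 1 1), Complex.normSq_nonneg (m 0 0)])
  have h01 : m 0 1 = 0 := Complex.normSq_eq_zero.mp (by
    nlinarith [Complex.normSq_nonneg (m 0 1), Complex.normSq_nonneg (m 1 0),
      Complex.normSq_nonneg (m 1 1), Complex.normSq_nonneg (m 0 0)])
  have h10 : m 1 0 = 0 := Complex.normSq_eq_zero.mp (by
    nlinarith [Complex.normSq_nonneg (m 0 1), Complex.normSq_nonneg (m 1 0),
      Complex.normSq_nonneg (m 1 1), Complex.normSq_nonneg (m 0 0)])
  have h11 : m 1 1 = 0 := Complex.normSq_eq_zero.mp (by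
    nlinarith [Complex.normSq_nonneg (m 0 1), Complex.normSq_nonneg (m 1 0),
      Complex.normSq_nonneg (m 1 1), Complex.normSq_nonneg (m 0 0)])
  ext i j
  fin_cases i <;> fin_cases j <;> simp [h00, h01, h10, h11]

lemma exists_polar_ne (a b : M2) (hne : (a, b) ≠ (0, 0)) :
    ∃ c d : M2, ((a + c).det - a.det - c.det) - ((b + d).det - b.det - d.det) ≠ 0 := by
  have hab : a ≠ 0 ∨ b ≠ 0 := by
    by_contra h
    push_neg at h
    exact hne (by rw [h.1, h.2])
  rcases hab with ha | hb
  · refine ⟨cconj a, 0, ?_⟩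
    simpa using polar_cconj_ne a ha
  · refine ⟨0, cconj b, fun h2 => polar_cconj_ne b hb ?_⟩
    have h0 : (a + 0).det - a.det - (0 : M2).det = 0 := by simp
    linear_combination h0 - h2

/-- For a nonzero isotropic vector `(a, b)` (i.e. `det a = det b`, `(a,b) ≠ (0,0)`),
the kernel of Clifford multiplication `m_{a,b} : S⁺ → S⁻` equals the range of the
Clifford multiplication `m′_{a,b} : S⁻ → S⁺` in the other direction. -/
theorem ker_cliffordMul_eq_range_cliffordMul' (a b : M2)
    (hiso : a.det = b.det) (hne : (a, b) ≠ (0, 0)) :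
    LinearMap.ker (cliffordMul a b) = LinearMap.range (cliffordMul' a b) := by
  obtain ⟨c, d, hβ⟩ := exists_polar_ne a b hne
  apply le_antisymm
  · intro p hp
    rw [LinearMap.mem_ker] at hp
    rw [LinearMap.mem_range]
    refine ⟨(((a + c).det - a.det - c.det) - ((b + d).det - b.det - d.det))⁻¹ •
      cliffordMul c d p, ?_⟩
    rw [_root_.map_smul]
    have hpol := cliffordMul'_polar a b c d p
    rw [hp, map_zero, add_zero] at hpol
    rw [hpol, smul_smul, inv_mul_cancel₀ hβ, one_smul]
  · rintro p ⟨w, rfl⟩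
    rw [LinearMap.mem_ker, cliffordMul_comp_cliffordMul' a b w, hiso, sub_self, zero_smul]
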